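/- arXiv:1805.09247 — 2 statements merged into one kernel-verified Lean document; each statement's English description precedes it below -/
import Mathlib

section
/- Let K, E ≥ 2 be integers and L ∈ [0,1]^{K×E} a loss matrix with rows ℓ_a. If actions a and b satisfy C_a ∩ C_b = ∅ (i.e., they are not weak neighbors), then there exists ε > 0 such that for all u ∈ 𝒫_{E−1}: ⟨ℓ_a, u⟩ + ⟨ℓ_b, u⟩ − 2·min_{c∈[K]} ⟨ℓ_c, u⟩ ≥ ε. -/
open scoped BigOperators

/-- The probability simplex in `ℝ^E`. -/
def probSimplex (E : ℕ) : Set (Fin E → ℝ) :=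
  {u | (∀ i, 0 ≤ u i ∧ u i ≤ 1) ∧ ∑ i, u i = 1}

/-- The cell of action `a`: the set of distributions on which `a` is optimal. -/
def cell {K E : ℕ} (L : Fin K → Fin E → ℝ) (a : Fin K) : Set (Fin E → ℝ) :=
  {u | u ∈ probSimplex E ∧ ∀ b, ∑ i, L a i * u i ≤ ∑ i, L b i * u i}

/-- `min_{c ∈ [K]} ⟨ℓ_c, u⟩`. -/
noncomputable def minLoss {K E : ℕ} (L : Fin K → Fin E → ℝ) (u : Fin E → ℝ) : ℝ :=
  ⨅ c : Fin K, ∑ i, L c i * u i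

/-!
The gap `⟨ℓ_a, u⟩ + ⟨ℓ_b, u⟩ - 2 min_c ⟨ℓ_c, u⟩` is a sum of two nonnegative terms, so it vanishes
exactly where both `a` and `b` are optimal, i.e. on `C_a ∩ C_b = ∅`. Being continuous and positive
on the compact simplex, it is bounded below there by a positive constant.
-/

theorem Continuous.ciInf_of_fintype {ι X L : Type*} [Fintype ι] [Nonempty ι] [TopologicalSpace X]
    [ConditionallyCompleteLattice L] [TopologicalSpace L] [ContinuousInf L] {f : ι → X → L}
    (hf : ∀ i, Continuous (f i)) : Continuous fun x ↦ ⨅ i, f i x := by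
  simpa only [← Finset.inf'_univ_eq_ciInf] using
    Continuous.finset_inf'_apply Finset.univ_nonempty fun i _ ↦ hf i

theorem probSimplex_eq_stdSimplex (E : ℕ) : probSimplex E = stdSimplex ℝ (Fin E) := by
  ext u
  exact ⟨fun hu ↦ ⟨fun i ↦ (hu.1 i).1, hu.2⟩, fun hu ↦ ⟨mem_Icc_of_mem_stdSimplex hu, hu.2⟩⟩

theorem isCompact_probSimplex (E : ℕ) : IsCompact (probSimplex E) :=
  probSimplex_eq_stdSimplex E ▸ isCompact_stdSimplex ℝ (Fin E)

section minLoss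

variable {K E : ℕ} (L : Fin K → Fin E → ℝ)

theorem minLoss_le (u : Fin E → ℝ) (c : Fin K) : minLoss L u ≤ ∑ i, L c i * u i :=
  ciInf_le (Set.finite_range _).bddBelow c

theorem continuous_minLoss [Nonempty (Fin K)] : Continuous (minLoss L) :=
  Continuous.ciInf_of_fintype fun c ↦ by fun_prop

theorem mem_cell_of_le_minLoss {a : Fin K} {u : Fin E → ℝ} (hu : u ∈ probSimplex E)
    (ha : ∑ i, L a i * u i ≤ minLoss L u) : u ∈ cell L a :=
  ⟨hu, fun c ↦ ha.trans (minLoss_le L u c)⟩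

theorem gap_pos_of_notMem_cell_inter {a b : Fin K} {u : Fin E → ℝ} (hu : u ∈ probSimplex E)
    (hab : u ∉ cell L a ∩ cell L b) :
    0 < (∑ i, L a i * u i) + (∑ i, L b i * u i) - 2 * minLoss L u := by
  have ha := minLoss_le L u a
  have hb := minLoss_le L u b
  by_contra! hgap
  exact hab ⟨mem_cell_of_le_minLoss L hu (by linarith), mem_cell_of_le_minLoss L hu (by linarith)⟩

end minLoss

theorem stmt4_general {K E : ℕ}
    (L : Fin K → Fin E → ℝ)
    (a b : Fin K) (h : cell L a ∩ cell L b = ∅) :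
    ∃ ε > (0 : ℝ), ∀ u ∈ probSimplex E,
      ε ≤ (∑ i, L a i * u i) + (∑ i, L b i * u i) - 2 * minLoss L u := by
  have : Nonempty (Fin K) := ⟨a⟩
  have hgap : Continuous fun u ↦
      (∑ i, L a i * u i) + (∑ i, L b i * u i) - 2 * minLoss L u := by
    have := continuous_minLoss L
    fun_prop
  exact (isCompact_probSimplex E).exists_forall_le' hgap.continuousOn fun u hu ↦
    gap_pos_of_notMem_cell_inter L hu (h ▸ Set.notMem_empty u)

theorem stmt4 {K E : ℕ} (hK : 2 ≤ K) (hE : 2 ≤ E)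
    (L : Fin K → Fin E → ℝ) (hL : ∀ a i, L a i ∈ Set.Icc (0 : ℝ) 1)
    (a b : Fin K) (h : cell L a ∩ cell L b = ∅) :
    ∃ ε > (0 : ℝ), ∀ u ∈ probSimplex E,
      ε ≤ (∑ i, L a i * u i) + (∑ i, L b i * u i) - 2 * minLoss L u :=
  stmt4_general L a b h
end

section
/- Let X_1, …, X_n be a sequence of square-integrable real random variables adapted to a filtration (ℱ_t)_{t=0}^n, let μ_t = E[X_t | ℱ_{t−1}], and suppose η > 0 satisfies η·X_t ≤ 1 almost surely for all t. Then for every δ ∈ (0,1): P( ∑_{t=1}^n (X_t − μ_t) ≥ η·∑_{t=1}^n E[X_t² | ℱ_{t−1}] + (1/η)·log(1/δ) ) ≤ δ. -/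
/-!
Write `D t = η X_t` and `B t = η μ_t + η² E[X_t² | ℱ_{t-1}]`. Since `exp x ≤ 1 + x + x²` for
`x ≤ 1`, conditioning gives `E[exp (D t) | ℱ_{t-1}] ≤ 1 + B t ≤ exp (B t)`, so
`exp (∑_{s ≤ t} (D s - B s))` is a nonnegative supermartingale started at `1` and its expectation
is at most `1`. The event in question is `{∑ (D t - B t) ≥ log (1/δ)}`, and Markov's inequality for
the exponential (a Chernoff bound) gives probability at most `δ`.
-/

open MeasureTheory ProbabilityTheory Finset Real

theorem Real.exp_le_one_add_add_sq {x : ℝ} (hx : x ≤ 1) : exp x ≤ 1 + x + x ^ 2 := by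
  rcases le_or_gt (-1) x with hx' | hx'
  · have h := abs_le.1 (abs_exp_sub_one_sub_id_le (abs_le.2 ⟨hx', hx⟩))
    linarith [h.2]
  · nlinarith [exp_lt_one_iff.2 (by linarith : x < 0)]

section

variable {Ω : Type*} {m mΩ : MeasurableSpace Ω} {μ : Measure Ω}

theorem condExp_exp_mul_le [IsFiniteMeasure μ] (hm : m ≤ mΩ) {Y : Ω → ℝ}
    (hY : AEStronglyMeasurable Y μ) (hY2 : Integrable (fun ω => Y ω ^ 2) μ) {η : ℝ}
    (hηY : ∀ᵐ ω ∂μ, η * Y ω ≤ 1) :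
    μ[fun ω => exp (η * Y ω)|m] ≤ᵐ[μ]
      fun ω => exp (η * μ[Y|m] ω + η ^ 2 * μ[fun ω => Y ω ^ 2|m] ω) := by
  have hYint : Integrable Y μ :=
    ((memLp_two_iff_integrable_sq hY).2 hY2).integrable one_le_two
  have hquad : Integrable (fun ω => 1 + η * Y ω + η ^ 2 * Y ω ^ 2) μ :=
    ((integrable_const 1).add (hYint.const_mul η)).add (hY2.const_mul (η ^ 2))
  have hexp_le : (fun ω => exp (η * Y ω)) ≤ᵐ[μ] fun ω => 1 + η * Y ω + η ^ 2 * Y ω ^ 2 := by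
    filter_upwards [hηY] with ω hω
    linarith [Real.exp_le_one_add_add_sq hω]
  have hquad_eq : μ[fun ω => 1 + η * Y ω + η ^ 2 * Y ω ^ 2|m] =ᵐ[μ]
      fun ω => 1 + η * μ[Y|m] ω + η ^ 2 * μ[fun ω => Y ω ^ 2|m] ω := by
    have h1 := condExp_add ((integrable_const (1 : ℝ)).add (hYint.const_mul η))
      (hY2.const_mul (η ^ 2)) m
    have h2 := condExp_add (integrable_const (1 : ℝ)) (hYint.const_mul η) m
    have h3 := condExp_smul (μ := μ) η Y m
    have h4 := condExp_smul (μ := μ) (η ^ 2) (fun ω => Y ω ^ 2) m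
    filter_upwards [h1, h2, h3, h4] with ω h1 h2 h3 h4
    simp only [Pi.smul_def, smul_eq_mul] at h3 h4
    change μ[((fun _ => 1) + fun ω => η * Y ω) + fun ω => η ^ 2 * Y ω ^ 2|m] ω = _
    rw [h1, Pi.add_apply, h2, Pi.add_apply, condExp_const hm, h3, h4]
  have hexp : Integrable (fun ω => exp (η * Y ω)) μ := by
    simpa using integrable_exp_mul_of_le 1 1 zero_le_one (hY.aemeasurable.const_mul η) hηY
  filter_upwards [condExp_mono (m := m) hexp hquad hexp_le, hquad_eq] with ω hmono heq
  rw [heq] at hmono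
  linarith [add_one_le_exp (η * μ[Y|m] ω + η ^ 2 * μ[fun ω => Y ω ^ 2|m] ω)]

/-- No integrability of `f * C` is needed: the densities `C` and `μ[C|m]` define the same
measure on `m`. -/
theorem lintegral_mul_ofReal_condExp (hm : m ≤ mΩ) [SigmaFinite (μ.trim hm)]
    {f : Ω → ENNReal} (hf : Measurable[m] f) {C : Ω → ℝ} (hC : Integrable C μ)
    (hC0 : 0 ≤ᵐ[μ] C) :
    ∫⁻ ω, f ω * ENNReal.ofReal (C ω) ∂μ = ∫⁻ ω, f ω * ENNReal.ofReal (μ[C|m] ω) ∂μ := by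
  have htrim : (μ.withDensity fun ω => ENNReal.ofReal (C ω)).trim hm
      = (μ.withDensity fun ω => ENNReal.ofReal (μ[C|m] ω)).trim hm := by
    refine @Measure.ext _ m _ _ fun s hs => ?_
    rw [trim_measurableSet_eq hm hs, trim_measurableSet_eq hm hs,
      withDensity_apply _ (hm s hs), withDensity_apply _ (hm s hs),
      ← ofReal_integral_eq_lintegral_ofReal hC.restrict (ae_restrict_of_ae hC0),
      ← ofReal_integral_eq_lintegral_ofReal integrable_condExp.restrict
        (ae_restrict_of_ae (condExp_nonneg hC0)),
      setIntegral_condExp hm hC hs]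
  have hwd : ∀ g : Ω → ℝ, AEMeasurable g μ → ∫⁻ ω, f ω * ENNReal.ofReal (g ω) ∂μ
      = ∫⁻ ω, f ω ∂(μ.withDensity fun ω => ENNReal.ofReal (g ω)).trim hm := by
    intro g hg
    rw [lintegral_trim hm hf, lintegral_withDensity_eq_lintegral_mul₀ hg.ennreal_ofReal
      ((hf.mono hm le_rfl).aemeasurable)]
    simp only [Pi.mul_apply, mul_comm]
  rw [hwd C hC.aemeasurable, hwd _ integrable_condExp.aemeasurable, htrim]

section ExpSupermartingale

variable {ℱ : Filtration ℕ mΩ} {D B : ℕ → Ω → ℝ} {n : ℕ}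

theorem stronglyMeasurable_sum_Icc_sub (hD : ∀ t ∈ Icc 1 n, StronglyMeasurable[ℱ t] (D t))
    (hB : ∀ t ∈ Icc 1 n, StronglyMeasurable[ℱ (t - 1)] (B t)) :
    StronglyMeasurable[ℱ n] fun ω => ∑ t ∈ Icc 1 n, (D t ω - B t ω) := by
  refine Finset.stronglyMeasurable_fun_sum _ fun t ht => ?_
  have htn : t ≤ n := (mem_Icc.1 ht).2
  exact ((hD t ht).mono (ℱ.mono htn)).sub ((hB t ht).mono (ℱ.mono (t.sub_le 1 |>.trans htn)))

theorem lintegral_exp_sum_Icc_sub_le_one [IsProbabilityMeasure μ]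
    (hD : ∀ t ∈ Icc 1 n, StronglyMeasurable[ℱ t] (D t))
    (hB : ∀ t ∈ Icc 1 n, StronglyMeasurable[ℱ (t - 1)] (B t))
    (hint : ∀ t ∈ Icc 1 n, Integrable (fun ω => exp (D t ω)) μ)
    (hcond : ∀ t ∈ Icc 1 n,
      μ[fun ω => exp (D t ω)|ℱ (t - 1)] ≤ᵐ[μ] fun ω => exp (B t ω)) :
    ∫⁻ ω, ENNReal.ofReal (exp (∑ t ∈ Icc 1 n, (D t ω - B t ω))) ∂μ ≤ 1 := by
  induction n with
  | zero => simp
  | succ n ih =>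
    have hsub : Icc 1 n ⊆ Icc 1 (n + 1) := Icc_subset_Icc_right n.le_succ
    have hlast : n + 1 ∈ Icc 1 (n + 1) := mem_Icc.2 ⟨n.succ_pos, le_rfl⟩
    set S : Ω → ℝ := fun ω => ∑ t ∈ Icc 1 n, (D t ω - B t ω)
    have hS : StronglyMeasurable[ℱ n] S := stronglyMeasurable_sum_Icc_sub
      (fun t ht => hD t (hsub ht)) (fun t ht => hB t (hsub ht))
    have hF : Measurable[ℱ n] fun ω => ENNReal.ofReal (exp (S ω - B (n + 1) ω)) :=
      (measurable_exp.comp (hS.sub (hB _ hlast)).measurable).ennreal_ofReal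
    calc ∫⁻ ω, ENNReal.ofReal (exp (∑ t ∈ Icc 1 (n + 1), (D t ω - B t ω))) ∂μ
        = ∫⁻ ω, ENNReal.ofReal (exp (S ω - B (n + 1) ω))
            * ENNReal.ofReal (exp (D (n + 1) ω)) ∂μ := by
          refine lintegral_congr fun ω => ?_
          rw [sum_Icc_succ_top (Nat.le_add_left 1 n), ← ENNReal.ofReal_mul (exp_pos _).le,
            ← exp_add]
          congr 2
          simp only [S]
          ring
      _ = ∫⁻ ω, ENNReal.ofReal (exp (S ω - B (n + 1) ω))
            * ENNReal.ofReal (μ[fun ω => exp (D (n + 1) ω)|ℱ n] ω) ∂μ :=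
          lintegral_mul_ofReal_condExp (ℱ.le n) hF (hint _ hlast)
            (ae_of_all _ fun ω => (exp_pos _).le)
      _ ≤ ∫⁻ ω, ENNReal.ofReal (exp (S ω - B (n + 1) ω))
            * ENNReal.ofReal (exp (B (n + 1) ω)) ∂μ := by
          refine lintegral_mono_ae ?_
          filter_upwards [hcond _ hlast] with ω hω
          gcongr
          exact hω
      _ = ∫⁻ ω, ENNReal.ofReal (exp (S ω)) ∂μ := by
          refine lintegral_congr fun ω => ?_
          rw [← ENNReal.ofReal_mul (exp_pos _).le, ← exp_add, sub_add_cancel]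
      _ ≤ 1 := ih (fun t ht => hD t (hsub ht)) (fun t ht => hB t (hsub ht))
          (fun t ht => hint t (hsub ht)) (fun t ht => hcond t (hsub ht))

end ExpSupermartingale

theorem measureReal_le_exp_neg_of_lintegral_exp_le_one [IsFiniteMeasure μ] {S : Ω → ℝ}
    (hS : AEMeasurable S μ) (h : ∫⁻ ω, ENNReal.ofReal (exp (S ω)) ∂μ ≤ 1) (a : ℝ) :
    μ.real {ω | a ≤ S ω} ≤ exp (-a) := by
  have hexp : AEStronglyMeasurable (fun ω => exp (S ω)) μ :=
    (measurable_exp.comp_aemeasurable hS).aestronglyMeasurable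
  have hint : Integrable (fun ω => exp (1 * S ω)) μ := by
    simp only [one_mul]
    refine ⟨hexp, ?_⟩
    rw [hasFiniteIntegral_iff_ofReal (ae_of_all _ fun ω => (exp_pos _).le)]
    exact h.trans_lt ENNReal.one_lt_top
  have hmgf : mgf S μ 1 ≤ 1 := by
    simp only [mgf, one_mul]
    rw [integral_eq_lintegral_of_nonneg_ae (ae_of_all _ fun ω => (exp_pos _).le) hexp]
    simpa using ENNReal.toReal_mono ENNReal.one_ne_top h
  calc μ.real {ω | a ≤ S ω} ≤ exp (-1 * a) * mgf S μ 1 :=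
        measure_ge_le_exp_mul_mgf a zero_le_one hint
    _ ≤ exp (-a) := by
        rw [neg_one_mul]
        exact mul_le_of_le_one_right (exp_pos _).le hmgf

end

theorem stmt8
    {Ω : Type*} {mΩ : MeasurableSpace Ω} {μ : Measure Ω} [IsProbabilityMeasure μ]
    (n : ℕ) (ℱ : Filtration ℕ mΩ)
    (X : ℕ → Ω → ℝ)
    (hadapt : ∀ t ∈ Icc 1 n, StronglyMeasurable[ℱ t] (X t))
    (hL2 : ∀ t ∈ Icc 1 n, Integrable (fun ω => (X t ω) ^ 2) μ)
    (η : ℝ) (hη : 0 < η)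
    (hbound : ∀ᵐ ω ∂μ, ∀ t ∈ Icc 1 n, η * X t ω ≤ 1)
    (δ : ℝ) (hδ : δ ∈ Set.Ioo (0 : ℝ) 1) :
    (μ {ω | η * ∑ t ∈ Icc 1 n, (μ[fun ω' => (X t ω') ^ 2|ℱ (t - 1)]) ω
        + Real.log (1 / δ) / η
        ≤ ∑ t ∈ Icc 1 n, (X t ω - (μ[X t|ℱ (t - 1)]) ω)}).toReal ≤ δ := by
  set B : ℕ → Ω → ℝ := fun t ω =>
    η * μ[X t|ℱ (t - 1)] ω + η ^ 2 * μ[fun ω' => X t ω' ^ 2|ℱ (t - 1)] ω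
  have hD : ∀ t ∈ Icc 1 n, StronglyMeasurable[ℱ t] fun ω => η * X t ω :=
    fun t ht => (hadapt t ht).const_mul η
  have hB : ∀ t ∈ Icc 1 n, StronglyMeasurable[ℱ (t - 1)] (B t) := fun t _ =>
    (stronglyMeasurable_condExp.const_mul η).add (stronglyMeasurable_condExp.const_mul (η ^ 2))
  have hηX : ∀ t ∈ Icc 1 n, ∀ᵐ ω ∂μ, η * X t ω ≤ 1 := fun t ht => by
    filter_upwards [hbound] with ω hω using hω t ht
  have hsupermart := lintegral_exp_sum_Icc_sub_le_one hD hB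
    (fun t ht => by
      simpa using integrable_exp_mul_of_le 1 1 zero_le_one
        ((hD t ht).mono (ℱ.le t)).measurable.aemeasurable (hηX t ht))
    (fun t ht => condExp_exp_mul_le (ℱ.le (t - 1))
      ((hadapt t ht).mono (ℱ.le t)).aestronglyMeasurable (hL2 t ht) (hηX t ht))
  have hsub : {ω | η * ∑ t ∈ Icc 1 n, (μ[fun ω' => (X t ω') ^ 2|ℱ (t - 1)]) ω
        + Real.log (1 / δ) / η ≤ ∑ t ∈ Icc 1 n, (X t ω - (μ[X t|ℱ (t - 1)]) ω)}
      ⊆ {ω | Real.log (1 / δ) ≤ ∑ t ∈ Icc 1 n, (η * X t ω - B t ω)} := by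
    intro ω hω
    simp only [Set.mem_ofPred_eq] at hω ⊢
    have hsum : ∑ t ∈ Icc 1 n, (η * X t ω - B t ω)
        = η * (∑ t ∈ Icc 1 n, (X t ω - μ[X t|ℱ (t - 1)] ω)
          - η * ∑ t ∈ Icc 1 n, μ[fun ω' => X t ω' ^ 2|ℱ (t - 1)] ω) := by
      simp only [B, mul_sum, ← sum_sub_distrib]
      exact sum_congr rfl fun t _ => by ring
    rw [hsum, ← div_le_iff₀' hη]
    linarith
  calc _ ≤ μ.real {ω | Real.log (1 / δ) ≤ ∑ t ∈ Icc 1 n, (η * X t ω - B t ω)} :=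
        measureReal_mono hsub
    _ ≤ exp (-Real.log (1 / δ)) := measureReal_le_exp_neg_of_lintegral_exp_le_one
        ((stronglyMeasurable_sum_Icc_sub hD hB).mono (ℱ.le n)).measurable.aemeasurable
        hsupermart _
    _ = δ := by rw [one_div, Real.log_inv, neg_neg, exp_log hδ.1]
end
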